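/- Singular value decay for the entrywise squared-modulus reciprocal Cauchy matrix: Let E = {z ∈ ℂ : |z − z₀| ≤ η} with z₀, η ∈ ℝ and 0 < η < z₀, let φ = √(z₀² − η²), and let μ₁ = (z₀ + φ)/(z₀ − φ). Let z_1, …, z_m ∈ E and w_1, …, w_n ∈ −E (m ≥ n), and let C̃ ∈ ℝ^{m×n} have entries C̃_{ij} = 1/|z_i − w_j|². Then for every triangular number t = k(k+1)/2 with 1 ≤ t < n, σ_{t+1}(C̃) ≤ ((z₀ + η)/(z₀ − η)) · ((3/2)√t + 1) · μ₁^{−(√(8t+1) − 1)/2} · ‖C̃‖₂. -/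

import Mathlib

/-!
The Cayley transform `s(ζ) = (ζ - φ) / (ζ + φ)` maps `E` into the disk of radius `μ₁^{-1/2}`,
and with `sᵢ = s(zᵢ)`, `uⱼ = s(-wⱼ)` one has `(zᵢ - wⱼ)(1 - sᵢ)(1 - uⱼ) = 2φ(1 - sᵢuⱼ)`.
Hence `C̃ᵢⱼ = aᵢ bⱼ / |1 - Vᵢⱼ|²` with `Vᵢⱼ = sᵢuⱼ` and `|Vᵢⱼ| ≤ μ₁⁻¹`. Expanding
`1 / |1 - V|² = ∑ V^p V̄^q` and keeping the `t = k(k+1)/2` separable terms with `p + q < k`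
gives a matrix of rank at most `t` whose entrywise relative error is at most
`μ₁^{-k} (1 + k (1 + μ₁⁻¹))`. For a matrix with nonnegative entries an entrywise bound passes
to the spectral norm, and the Eckart–Young description of `σ_{t+1}` concludes.
-/

/-- The spectral norm of a complex matrix. -/
noncomputable def specNorm {m n : ℕ} (M : Matrix (Fin m) (Fin n) ℂ) : ℝ :=
  ‖LinearMap.toContinuousLinearMap (Matrix.toEuclideanLin M)‖

/-- The `j`-th largest singular value of a complex matrix (for `j ≥ 1`), via the
Eckart–Young characterization `σ_j(M) = min {‖M - N‖₂ : rank N < j}`. -/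
noncomputable def singularValue {m n : ℕ} (M : Matrix (Fin m) (Fin n) ℂ) (j : ℕ) : ℝ :=
  sInf ((fun N : Matrix (Fin m) (Fin n) ℂ => specNorm (M - N)) '' {N | N.rank < j})

open Finset Matrix ComplexConjugate

section TruncatedGeometric

variable {R : Type*}

def truncGeomSum [CommRing R] (k : ℕ) (v w : R) : R :=
  ∑ q ∈ range k, ∑ p ∈ range (k - q), v ^ p * w ^ q

theorem one_sub_mul_one_sub_mul_truncGeomSum [CommRing R] (k : ℕ) (v w : R) :
    (1 - v) * (1 - w) * truncGeomSum k v w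
      = 1 - (w ^ k + ∑ q ∈ range k, (w ^ q - w ^ (q + 1)) * v ^ (k - q)) := by
  have geom (x : R) (N : ℕ) : (1 - x) * ∑ p ∈ range N, x ^ p = 1 - x ^ N := by
    linear_combination -geom_sum_mul x N
  calc (1 - v) * (1 - w) * truncGeomSum k v w
      = ∑ q ∈ range k, ((1 - v) * ∑ p ∈ range (k - q), v ^ p) * ((1 - w) * w ^ q) := by
        simp only [truncGeomSum, mul_sum, sum_mul]
        exact sum_congr rfl fun q _ => sum_congr rfl fun p _ => by ring
    _ = (1 - w) * ∑ q ∈ range k, w ^ q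
          - ∑ q ∈ range k, (w ^ q - w ^ (q + 1)) * v ^ (k - q) := by
        rw [mul_sum, ← sum_sub_distrib]
        exact sum_congr rfl fun q _ => by rw [geom]; ring
    _ = _ := by rw [geom]; ring

theorem norm_one_sub_mul_one_sub_mul_truncGeomSum_le [NormedCommRing R] [NormOneClass R]
    (k : ℕ) {v w : R} {x : ℝ} (hv : ‖v‖ ≤ x) (hw : ‖w‖ ≤ x) :
    ‖1 - (1 - v) * (1 - w) * truncGeomSum k v w‖ ≤ x ^ k * (1 + k * (1 + x)) := by
  have hx : 0 ≤ x := (norm_nonneg v).trans hv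
  have hpow (y : R) (hy : ‖y‖ ≤ x) (p : ℕ) : ‖y ^ p‖ ≤ x ^ p :=
    (norm_pow_le y p).trans (pow_le_pow_left₀ (norm_nonneg y) hy p)
  have hterm : ∀ q ∈ range k, ‖(w ^ q - w ^ (q + 1)) * v ^ (k - q)‖ ≤ x ^ k * (1 + x) := by
    intro q hq
    have hqk : q + (k - q) = k := Nat.add_sub_cancel' (mem_range.mp hq).le
    calc ‖(w ^ q - w ^ (q + 1)) * v ^ (k - q)‖ ≤ (x ^ q + x ^ (q + 1)) * x ^ (k - q) :=
          (norm_mul_le _ _).trans <| mul_le_mul ((norm_sub_le _ _).trans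
            (add_le_add (hpow w hw q) (hpow w hw _))) (hpow v hv _) (norm_nonneg _)
            (by positivity)
      _ = x ^ (q + (k - q)) * (1 + x) := by ring
      _ = x ^ k * (1 + x) := by rw [hqk]
  rw [one_sub_mul_one_sub_mul_truncGeomSum, sub_sub_cancel]
  calc _ ≤ ‖w ^ k‖ + ∑ q ∈ range k, ‖(w ^ q - w ^ (q + 1)) * v ^ (k - q)‖ :=
        (norm_add_le _ _).trans (add_le_add_right (norm_sum_le _ _) _)
    _ ≤ x ^ k + ∑ _q ∈ range k, x ^ k * (1 + x) := add_le_add (hpow w hw k) (sum_le_sum hterm)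
    _ = x ^ k * (1 + k * (1 + x)) := by rw [sum_const, card_range, nsmul_eq_mul]; ring

theorem truncGeomSum_eq_sum_sigma [CommRing R] (k : ℕ) (v w : R) :
    truncGeomSum k v w = ∑ c : Σ q : Fin k, Fin (k - q), v ^ (c.2 : ℕ) * w ^ (c.1 : ℕ) := by
  rw [Fintype.sum_sigma, truncGeomSum, ← Fin.sum_univ_eq_sum_range]
  exact sum_congr rfl fun q _ =>
    (Fin.sum_univ_eq_sum_range (fun p => v ^ p * w ^ (q : ℕ)) _).symm

theorem card_sigma_fin_sub (k : ℕ) :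
    Fintype.card (Σ q : Fin k, Fin (k - q)) = k * (k + 1) / 2 := by
  have hreflect : ∑ q ∈ range (k + 1), (k - q) = ∑ q ∈ range (k + 1), q := by
    simpa using sum_range_reflect (fun q => q) (k + 1)
  rw [sum_range_succ, Nat.sub_self, add_zero] at hreflect
  simp only [Fintype.card_sigma, Fintype.card_fin]
  rw [Fin.sum_univ_eq_sum_range (fun q => k - q), hreflect, sum_range_id, Nat.add_sub_cancel,
    mul_comm]

theorem norm_one_sub_norm_sq_mul_truncGeomSum_le (k : ℕ) {V : ℂ} {x : ℝ} (hV : ‖V‖ ≤ x) :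
    ‖1 - ‖1 - V‖ ^ 2 * truncGeomSum k V (conj V)‖ ≤ x ^ k * (1 + k * (1 + x)) := by
  have hconj : (1 - V) * (1 - conj V) = (‖1 - V‖ : ℂ) ^ 2 := by
    simpa using Complex.mul_conj' (1 - V)
  rw [← hconj]
  exact norm_one_sub_mul_one_sub_mul_truncGeomSum_le k hV ((Complex.norm_conj V).trans_le hV)

end TruncatedGeometric

section SpectralNorm

open scoped Matrix.Norms.L2Operator

variable {m n : ℕ}

theorem specNorm_le_of_norm_le {A : Matrix (Fin m) (Fin n) ℂ} {B : Matrix (Fin m) (Fin n) ℝ}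
    (h : ∀ i j, ‖A i j‖ ≤ B i j) : specNorm A ≤ specNorm (B.map Complex.ofReal) := by
  refine ContinuousLinearMap.opNorm_le_bound _ (norm_nonneg _) fun x => ?_
  set y : EuclideanSpace ℂ (Fin n) := WithLp.toLp 2 fun j => (‖x j‖ : ℂ)
  have hy : ‖y‖ = ‖x‖ := by simp [y, EuclideanSpace.norm_eq]
  have hrow (i : Fin m) : ‖(A *ᵥ x.ofLp) i‖ ≤ ‖(B.map Complex.ofReal *ᵥ y.ofLp) i‖ := by
    have hB : (B.map Complex.ofReal *ᵥ y.ofLp) i = ((∑ j, B i j * ‖x j‖ : ℝ) : ℂ) := by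
      simp [y, mulVec, dotProduct]
    rw [hB, Complex.norm_real, Real.norm_of_nonneg (sum_nonneg fun j _ =>
      mul_nonneg ((norm_nonneg (A i j)).trans (h i j)) (norm_nonneg _))]
    calc ‖(A *ᵥ x.ofLp) i‖ ≤ ∑ j, ‖A i j‖ * ‖x j‖ := by
          simpa only [mulVec, dotProduct, norm_mul] using
            norm_sum_le univ fun j => A i j * x.ofLp j
      _ ≤ ∑ j, B i j * ‖x j‖ := sum_le_sum fun j _ => by gcongr; exact h i j
  calc _ ≤ ‖LinearMap.toContinuousLinearMap (toEuclideanLin (B.map Complex.ofReal)) y‖ := by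
        rw [← sq_le_sq₀ (norm_nonneg _) (norm_nonneg _), EuclideanSpace.norm_sq_eq,
          EuclideanSpace.norm_sq_eq]
        exact sum_le_sum fun i _ => pow_le_pow_left₀ (norm_nonneg _) (hrow i) 2
    _ ≤ _ := ContinuousLinearMap.le_opNorm _ _
    _ = _ := by rw [hy]; rfl

theorem specNorm_smul (c : ℂ) (M : Matrix (Fin m) (Fin n) ℂ) :
    specNorm (c • M) = ‖c‖ * specNorm M :=
  norm_smul c M

theorem singularValue_le_specNorm_sub (M N : Matrix (Fin m) (Fin n) ℂ) {j : ℕ}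
    (hN : N.rank < j) : singularValue M j ≤ specNorm (M - N) :=
  csInf_le ⟨0, by rintro _ ⟨_, _, rfl⟩; exact norm_nonneg _⟩ ⟨N, hN, rfl⟩

theorem singularValue_le_of_mul_norm_sq_eq (C : Matrix (Fin m) (Fin n) ℝ)
    (hC0 : ∀ i j, 0 ≤ C i j) (a : Fin m → ℝ) (b : Fin n → ℝ) (s : Fin m → ℂ) (u : Fin n → ℂ)
    {x : ℝ} (hx : 0 ≤ x) (hsu : ∀ i j, ‖s i * u j‖ ≤ x)
    (hC : ∀ i j, C i j * ‖1 - s i * u j‖ ^ 2 = a i * b j) (k : ℕ) :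
    singularValue (C.map Complex.ofReal) (k * (k + 1) / 2 + 1)
      ≤ x ^ k * (1 + k * (1 + x)) * specNorm (C.map Complex.ofReal) := by
  set g := x ^ k * (1 + k * (1 + x))
  -- `⟨q, p⟩` indexes the term `Vᵢⱼ ^ p * conj Vᵢⱼ ^ q` (`p + q < k`) of the expansion of
  -- `1 / ‖1 - Vᵢⱼ‖ ^ 2`, where `Vᵢⱼ = sᵢ * uⱼ`.
  let P : Matrix (Fin m) (Σ q : Fin k, Fin (k - q)) ℂ :=
    of fun i c => a i * s i ^ (c.2 : ℕ) * conj (s i) ^ (c.1 : ℕ)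
  let Q : Matrix (Σ q : Fin k, Fin (k - q)) (Fin n) ℂ :=
    of fun c j => b j * u j ^ (c.2 : ℕ) * conj (u j) ^ (c.1 : ℕ)
  have hrank : (P * Q).rank < k * (k + 1) / 2 + 1 :=
    Nat.lt_succ_of_le <| (rank_mul_le_left P Q).trans <|
      card_sigma_fin_sub k ▸ rank_le_card_width P
  have hPQ (i j) : (P * Q) i j = a i * b j * truncGeomSum k (s i * u j) (conj (s i * u j)) := by
    rw [truncGeomSum_eq_sum_sigma, mul_apply, mul_sum]
    exact sum_congr rfl fun c _ => by simp only [P, Q, of_apply, map_mul]; ring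
  have herr (i j) : ‖(C.map Complex.ofReal - P * Q) i j‖ ≤ (g • C) i j := by
    have hentry : (C.map Complex.ofReal - P * Q) i j
        = C i j * (1 - ‖1 - s i * u j‖ ^ 2 * truncGeomSum k (s i * u j) (conj (s i * u j))) := by
      have := congrArg Complex.ofReal (hC i j)
      rw [Matrix.sub_apply, map_apply, hPQ]
      push_cast at this ⊢
      linear_combination truncGeomSum k (s i * u j) (conj (s i * u j)) * this
    rw [hentry, norm_mul, Complex.norm_real, Real.norm_of_nonneg (hC0 i j), Matrix.smul_apply,
      smul_eq_mul, mul_comm g]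
    exact mul_le_mul_of_nonneg_left (norm_one_sub_norm_sq_mul_truncGeomSum_le k (hsu i j))
      (hC0 i j)
  calc singularValue (C.map Complex.ofReal) (k * (k + 1) / 2 + 1)
      ≤ specNorm (C.map Complex.ofReal - P * Q) := singularValue_le_specNorm_sub _ _ hrank
    _ ≤ specNorm ((g • C).map Complex.ofReal) := specNorm_le_of_norm_le herr
    _ = g * specNorm (C.map Complex.ofReal) := by
        rw [show (g • C).map Complex.ofReal = (g : ℂ) • C.map Complex.ofReal by ext; simp,
          specNorm_smul, Complex.norm_real, Real.norm_of_nonneg (by positivity)]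

end SpectralNorm

noncomputable def cayley (φ : ℝ) (ζ : ℂ) : ℂ := (ζ - φ) / (ζ + φ)

section Cayley

variable {φ z₀ η : ℝ} {ζ ξ : ℂ}

theorem re_pos_of_norm_sub_le (hζ : ‖ζ - z₀‖ ≤ η) (hη : η < z₀) : 0 < ζ.re := by
  have := (Complex.abs_re_le_norm (ζ - z₀)).trans hζ
  rw [Complex.sub_re, Complex.ofReal_re, abs_le] at this
  linarith [this.1]

theorem add_mul_one_sub_cayley_mul_one_sub_cayley (hζ : ζ + φ ≠ 0) (hξ : ξ + φ ≠ 0) :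
    (ζ + ξ) * ((1 - cayley φ ζ) * (1 - cayley φ ξ)) = 2 * φ * (1 - cayley φ ζ * cayley φ ξ) := by
  unfold cayley
  field_simp
  ring

theorem inv_norm_add_sq_mul_norm_one_sub_cayley_mul_cayley_sq (hζ : 0 < ζ.re) (hξ : 0 < ξ.re)
    (hφ : 0 < φ) :
    (‖ζ + ξ‖ ^ 2)⁻¹ * ‖1 - cayley φ ζ * cayley φ ξ‖ ^ 2
      = ‖1 - cayley φ ζ‖ ^ 2 / (4 * φ ^ 2) * ‖1 - cayley φ ξ‖ ^ 2 := by
  have hadd {ζ : ℂ} (hζ : 0 < ζ.re) : ζ + φ ≠ 0 :=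
    Complex.ne_zero_of_re_pos (by simpa using add_pos hζ hφ)
  have hζξ : ‖ζ + ξ‖ ≠ 0 :=
    norm_ne_zero_iff.mpr (Complex.ne_zero_of_re_pos (by simpa using add_pos hζ hξ))
  have h := congrArg (‖·‖ ^ 2) (add_mul_one_sub_cayley_mul_one_sub_cayley (hadd hζ) (hadd hξ))
  simp only [norm_mul, Complex.norm_ofNat, Complex.norm_real, Real.norm_of_nonneg hφ.le] at h
  field_simp
  linear_combination -h

theorem norm_cayley_sq_le (hζ : ‖ζ - z₀‖ ≤ η) (hη : η < z₀) (hφ : 0 ≤ φ)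
    (hφ_sq : φ ^ 2 = z₀ ^ 2 - η ^ 2) : ‖cayley φ ζ‖ ^ 2 ≤ (z₀ - φ) / (z₀ + φ) := by
  have hre := re_pos_of_norm_sub_le hζ hη
  have hden : 0 < ‖ζ + φ‖ ^ 2 := by
    rw [Complex.sq_norm, Complex.normSq_apply]
    simp only [Complex.add_re, Complex.ofReal_re, Complex.add_im, Complex.ofReal_im]
    nlinarith [sq_nonneg ζ.im]
  have hdisk : (ζ.re - z₀) ^ 2 + ζ.im ^ 2 ≤ η ^ 2 := by
    have h := pow_le_pow_left₀ (norm_nonneg _) hζ 2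
    rwa [Complex.sq_norm, Complex.normSq_apply, Complex.sub_re, Complex.sub_im,
      Complex.ofReal_re, Complex.ofReal_im, ← sq, sub_zero, ← sq] at h
  rw [cayley, norm_div, div_pow, div_le_div_iff₀ hden (by nlinarith), Complex.sq_norm,
    Complex.sq_norm, Complex.normSq_apply, Complex.normSq_apply]
  simp only [Complex.add_re, Complex.sub_re, Complex.ofReal_re, Complex.add_im, Complex.sub_im,
    Complex.ofReal_im]
  nlinarith [mul_nonneg hφ (sub_nonneg.mpr hdisk)]

theorem norm_cayley_mul_cayley_le (hζ : ‖ζ - z₀‖ ≤ η) (hξ : ‖ξ - z₀‖ ≤ η) (hη : η < z₀)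
    (hφ : 0 ≤ φ) (hφ_sq : φ ^ 2 = z₀ ^ 2 - η ^ 2) :
    ‖cayley φ ζ * cayley φ ξ‖ ≤ (z₀ - φ) / (z₀ + φ) := by
  have hρ : 0 ≤ (z₀ - φ) / (z₀ + φ) := (sq_nonneg _).trans (norm_cayley_sq_le hζ hη hφ hφ_sq)
  rw [← pow_le_pow_iff_left₀ (norm_nonneg _) hρ two_ne_zero, norm_mul, mul_pow, sq ((z₀ - φ) / _)]
  exact mul_le_mul (norm_cayley_sq_le hζ hη hφ hφ_sq) (norm_cayley_sq_le hξ hη hφ hφ_sq)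
    (sq_nonneg _) hρ

theorem one_add_div_le_div (hη : 0 ≤ η) (hz : η < z₀) (hφ : 0 ≤ φ)
    (hφ_sq : φ ^ 2 = z₀ ^ 2 - η ^ 2) : 1 + (z₀ - φ) / (z₀ + φ) ≤ (z₀ + η) / (z₀ - η) := by
  have hφ_ge : z₀ - η ≤ φ := by nlinarith
  have hpos : 0 < z₀ + φ := by linarith
  rw [add_div' _ _ _ hpos.ne', div_le_div_iff₀ hpos (by linarith)]
  nlinarith

end Cayley

section Triangular

variable {k t : ℝ}

theorem sqrt_eight_mul_add_one_of_two_mul_eq (hk : 0 ≤ k) (ht : 2 * t = k * (k + 1)) :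
    √(8 * t + 1) = 2 * k + 1 := by
  rw [show 8 * t + 1 = (2 * k + 1) ^ 2 by linear_combination 4 * ht, Real.sqrt_sq (by linarith)]

theorem le_three_halves_mul_sqrt_of_two_mul_eq (hk : 0 ≤ k) (ht : 2 * t = k * (k + 1)) :
    k ≤ 3 / 2 * √t := by
  rw [show 3 / 2 * √t = √(9 / 4 * t) by rw [Real.sqrt_mul' _ (by nlinarith)]; norm_num]
  exact Real.le_sqrt_of_sq_le (by nlinarith)

theorem pow_mul_le_of_two_mul_eq {k : ℕ} {ρ c : ℝ} (ht : 2 * t = k * (k + 1)) (hρ : 0 ≤ ρ)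
    (hc : 1 + ρ ≤ c) :
    ρ ^ k * (1 + k * (1 + ρ)) ≤ c * (3 / 2 * √t + 1) * ρ⁻¹ ^ (-(√(8 * t + 1) - 1) / 2) := by
  have hk := le_three_halves_mul_sqrt_of_two_mul_eq k.cast_nonneg ht
  rw [sqrt_eight_mul_add_one_of_two_mul_eq k.cast_nonneg ht,
    show -(2 * (k : ℝ) + 1 - 1) / 2 = -k by ring, Real.rpow_neg (inv_nonneg.mpr hρ),
    Real.rpow_natCast, inv_pow, inv_inv, mul_comm _ (ρ ^ k)]
  exact mul_le_mul_of_nonneg_left (by nlinarith) (pow_nonneg hρ k)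

end Triangular

theorem squared_modulus_cauchy_singular_values_general {m n : ℕ}
    (z₀ η : ℝ) (hη : 0 < η) (hz : η < z₀)
    (φ : ℝ) (hφ : φ = Real.sqrt (z₀ ^ 2 - η ^ 2))
    (μ₁ : ℝ) (hμ : μ₁ = (z₀ + φ) / (z₀ - φ))
    (z : Fin m → ℂ) (w : Fin n → ℂ)
    (hzE : ∀ i, ‖z i - (z₀ : ℂ)‖ ≤ η)
    (hwE : ∀ j, ‖-(w j) - (z₀ : ℂ)‖ ≤ η)
    (Ct : Matrix (Fin m) (Fin n) ℂ)
    (hCt : ∀ i j, Ct i j = (((‖z i - w j‖ ^ 2)⁻¹ : ℝ) : ℂ))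
    (k t : ℕ) (htk : t = k * (k + 1) / 2) :
    singularValue Ct (t + 1) ≤
      ((z₀ + η) / (z₀ - η)) * ((3 / 2) * Real.sqrt t + 1) *
        μ₁ ^ (-(Real.sqrt (8 * (t : ℝ) + 1) - 1) / 2) * specNorm Ct := by
  have hφ_sq : φ ^ 2 = z₀ ^ 2 - η ^ 2 := hφ ▸ Real.sq_sqrt (by nlinarith)
  have hφ_pos : 0 < φ := hφ ▸ Real.sqrt_pos.mpr (by nlinarith)
  have hρ : 0 ≤ (z₀ - φ) / (z₀ + φ) := div_nonneg (by nlinarith) (by linarith)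
  have hCt_eq : Ct = (of fun i j => (‖z i - w j‖ ^ 2)⁻¹).map Complex.ofReal := by
    ext i j
    simp [hCt]
  have hkt : 2 * (t : ℝ) = k * (k + 1) := by
    exact_mod_cast htk ▸ Nat.two_mul_div_two_of_even (Nat.even_mul_succ_self k)
  calc singularValue Ct (t + 1)
      ≤ ((z₀ - φ) / (z₀ + φ)) ^ k * (1 + k * (1 + (z₀ - φ) / (z₀ + φ))) * specNorm Ct := by
        rw [hCt_eq, htk]
        refine singularValue_le_of_mul_norm_sq_eq _ (fun i j => inv_nonneg.mpr (sq_nonneg _))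
          (fun i => ‖1 - cayley φ (z i)‖ ^ 2 / (4 * φ ^ 2)) (fun j => ‖1 - cayley φ (-w j)‖ ^ 2)
          (fun i => cayley φ (z i)) (fun j => cayley φ (-w j)) hρ
          (fun i j => norm_cayley_mul_cayley_le (hzE i) (hwE j) hz hφ_pos.le hφ_sq)
          (fun i j => ?_) k
        simpa only [of_apply, sub_eq_add_neg] using
          inv_norm_add_sq_mul_norm_one_sub_cayley_mul_cayley_sq
            (re_pos_of_norm_sub_le (hzE i) hz) (re_pos_of_norm_sub_le (hwE j) hz) hφ_pos
    _ ≤ _ := by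
        rw [hμ, ← inv_div (z₀ - φ) (z₀ + φ)]
        exact mul_le_mul_of_nonneg_right (pow_mul_le_of_two_mul_eq hkt hρ
          (one_add_div_le_div hη.le hz hφ_pos.le hφ_sq)) (norm_nonneg _)

/-- **Singular value decay for the entrywise squared-modulus reciprocal Cauchy matrix.**
If `C̃_{ij} = 1/|zᵢ - wⱼ|²` with `zᵢ ∈ E = {z : |z - z₀| ≤ η}`, `wⱼ ∈ -E`
(`0 < η < z₀`, `m ≥ n`), `φ = √(z₀² - η²)`, `μ₁ = (z₀ + φ)/(z₀ - φ)`, then for each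
triangular number `t = k(k+1)/2` with `1 ≤ t < n`,
`σ_{t+1}(C̃) ≤ ((z₀+η)/(z₀-η)) ((3/2)√t + 1) μ₁^{-(√(8t+1)-1)/2} ‖C̃‖₂`. -/
theorem squared_modulus_cauchy_singular_values {m n : ℕ} (hmn : n ≤ m)
    (z₀ η : ℝ) (hη : 0 < η) (hz : η < z₀)
    (φ : ℝ) (hφ : φ = Real.sqrt (z₀ ^ 2 - η ^ 2))
    (μ₁ : ℝ) (hμ : μ₁ = (z₀ + φ) / (z₀ - φ))
    (z : Fin m → ℂ) (w : Fin n → ℂ)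
    (hzE : ∀ i, ‖z i - (z₀ : ℂ)‖ ≤ η)
    (hwE : ∀ j, ‖-(w j) - (z₀ : ℂ)‖ ≤ η)
    (Ct : Matrix (Fin m) (Fin n) ℂ)
    (hCt : ∀ i j, Ct i j = (((‖z i - w j‖ ^ 2)⁻¹ : ℝ) : ℂ))
    (k t : ℕ) (htk : t = k * (k + 1) / 2) (ht1 : 1 ≤ t) (htn : t < n) :
    singularValue Ct (t + 1) ≤
      ((z₀ + η) / (z₀ - η)) * ((3 / 2) * Real.sqrt t + 1) *
        μ₁ ^ (-(Real.sqrt (8 * (t : ℝ) + 1) - 1) / 2) * specNorm Ct :=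
  squared_modulus_cauchy_singular_values_general z₀ η hη hz φ hφ μ₁ hμ z w hzE hwE Ct hCt k t htk
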